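/- arXiv:1803.00921 — 2 statements merged into one kernel-verified Lean document; each statement's English description precedes it below -/
import Mathlib

section
/- Let G : ℕ → ℂ satisfy G(i+2) = G(i+1) + G(i) for all i ≥ 0, let n be a nonnegative integer, and let w ∈ ℂ be such that Δ := ∑_{s=0}^{n+1} fib-binom(n+1, s) · (−1)^{⌈(n−s+1)/2⌉} · w^{n−s+1} ≠ 0 and such that w^k · G(k)^n → 0 as k → ∞. Then the series ∑_{j=0}^{∞} w^j · G(j)^n converges and equals ( ∑_{s=0}^{n+1} fib-binom(n+1, s)·(−1)^{⌈(n−s+1)/2⌉} · ∑_{j=0}^{s−1} w^{j+n−s+1}·G(j)^n ) / Δ. -/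
/-!
By Binet's formula `G k = A φ^k + B ψ^k`, so `f k = w^k G(k)^n` is the sum of the `n + 1`
geometric sequences `D_i (w φ^i ψ^(n-i))^k`. A Fibonomial analogue of the binomial theorem,
proved by induction from the Fibonomial Pascal rule, expands `∏_{i ≤ n} (x - w φ^i ψ^(n-i))`
as `∑_s fib-binom(n+1, s) (-1)^⌈(n+1-s)/2⌉ w^(n+1-s) x^s`; hence `f` satisfies the linear
recurrence with these coefficients. Multiplying a partial sum of `f` by `Δ`, the sum of the
coefficients, and cancelling with the recurrence leaves the numerator plus boundary terms that
vanish as `f → 0`. Absolute convergence comes from the ratios `w φ^i ψ^(n-i)` having pairwise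
distinct norms: `f → 0` then forces every ratio that occurs with a nonzero coefficient to have
norm `< 1`.
-/

/-- The Fibonomial coefficient `fib-binom(p, q) = ∏_{j=1}^{q} F(p-q+j) / F(j)`. -/
noncomputable def fibBinom (p q : ℕ) : ℂ :=
  ∏ j ∈ Finset.Icc 1 q, (Nat.fib (p - q + j) : ℂ) / (Nat.fib j : ℂ)

open Finset Filter Topology
open scoped goldenRatio

theorem sum_mul_sum_mul_pow_add_eq_zero {R ι : Type*} [CommRing R] {t : Finset ι} {D z : ι → R}
    {b : ℕ → R} {d : ℕ} (hz : ∀ i ∈ t, ∑ s ∈ range (d + 1), b s * z i ^ s = 0) (m : ℕ) :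
    ∑ s ∈ range (d + 1), b s * ∑ i ∈ t, D i * z i ^ (m + s) = 0 := by
  simp_rw [mul_sum]
  rw [sum_comm]
  refine sum_eq_zero fun i hi => ?_
  calc ∑ s ∈ range (d + 1), b s * (D i * z i ^ (m + s))
      = D i * z i ^ m * ∑ s ∈ range (d + 1), b s * z i ^ s := by
        rw [mul_sum]; exact sum_congr rfl fun s _ => by ring
    _ = 0 := by rw [hz i hi, mul_zero]

theorem sum_mul_sum_range_add_eq_of_recurrence {R : Type*} [CommRing R] {b f : ℕ → R} {d : ℕ}
    (hrec : ∀ m, ∑ s ∈ range (d + 1), b s * f (m + s) = 0) (N : ℕ) :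
    (∑ s ∈ range (d + 1), b s) * ∑ j ∈ range (N + d), f j =
      ∑ s ∈ range (d + 1), b s * ∑ j ∈ range s, f j +
        ∑ s ∈ range (d + 1), b s * ∑ u ∈ range (d - s), f (N + s + u) := by
  have hsplit : ∀ s ∈ range (d + 1), b s * ∑ j ∈ range (N + d), f j =
      b s * ∑ j ∈ range s, f j + ∑ m ∈ range N, b s * f (m + s) +
        b s * ∑ u ∈ range (d - s), f (N + s + u) := by
    intro s hs
    rw [show N + d = s + N + (d - s) by simp at hs; omega, sum_range_add, sum_range_add, mul_add,
      mul_add, mul_sum (range N)]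
    simp only [add_comm s]
  have hmid : ∑ s ∈ range (d + 1), ∑ m ∈ range N, b s * f (m + s) = 0 := by
    rw [sum_comm]
    exact sum_eq_zero fun m _ => hrec m
  rw [sum_mul, sum_congr rfl hsplit, sum_add_distrib, sum_add_distrib, hmid, add_zero]

theorem tendsto_sum_range_of_recurrence {K : Type*} [Field K] [TopologicalSpace K]
    [IsTopologicalRing K] {b f : ℕ → K} {d : ℕ}
    (hrec : ∀ m, ∑ s ∈ range (d + 1), b s * f (m + s) = 0)
    (hf : Tendsto f atTop (𝓝 0)) (hb : ∑ s ∈ range (d + 1), b s ≠ 0) :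
    Tendsto (fun N => ∑ j ∈ range N, f j) atTop
      (𝓝 ((∑ s ∈ range (d + 1), b s * ∑ j ∈ range s, f j) / ∑ s ∈ range (d + 1), b s)) := by
  rw [← tendsto_add_atTop_iff_nat d]
  have htail : Tendsto (fun N => ∑ s ∈ range (d + 1), b s * ∑ u ∈ range (d - s), f (N + s + u))
      atTop (𝓝 0) := by
    have := tendsto_finsetSum (range (d + 1)) fun s _ =>
      (tendsto_finsetSum (range (d - s)) fun u _ =>
        hf.comp (tendsto_add_atTop_nat (s + u))).const_mul (b s)
    simpa [Function.comp_def, add_assoc] using this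
  have := (htail.const_add (∑ s ∈ range (d + 1), b s * ∑ j ∈ range s, f j)).const_mul
    (∑ s ∈ range (d + 1), b s)⁻¹
  rw [add_zero, ← div_eq_inv_mul] at this
  refine this.congr fun N => ?_
  rw [← sum_mul_sum_range_add_eq_of_recurrence hrec N, inv_mul_cancel_left₀ hb]

theorem norm_lt_one_of_tendsto_sum_mul_pow {𝕜 ι : Type*} [NormedField 𝕜] {s : Finset ι}
    {D z : ι → 𝕜} (hz : Set.InjOn (fun i => ‖z i‖) s)
    (h : Tendsto (fun k => ∑ i ∈ s, D i * z i ^ k) atTop (𝓝 0)) {i : ι} (hi : i ∈ s)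
    (hDi : D i ≠ 0) : ‖z i‖ < 1 := by
  classical
  set s' := s.filter (D · ≠ 0)
  obtain ⟨I, hI, hmax⟩ := s'.exists_max_image (‖z ·‖) ⟨i, mem_filter.2 ⟨hi, hDi⟩⟩
  refine (hmax i (mem_filter.2 ⟨hi, hDi⟩)).trans_lt (not_le.1 fun hI1 => ?_)
  obtain ⟨hIs, hDI⟩ := mem_filter.1 hI
  have hzI : z I ≠ 0 := norm_pos_iff.1 (one_pos.trans_le hI1)
  have hsum : ∀ k, (∑ i ∈ s, D i * z i ^ k) / z I ^ k = ∑ j ∈ s', D j * (z j / z I) ^ k := by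
    intro k
    rw [← sum_filter_of_ne fun j _ hj => left_ne_zero_of_mul hj, sum_div]
    exact sum_congr rfl fun j _ => by rw [div_pow, mul_div_assoc]
  -- after rescaling by `z I ^ k`, every term but the `I`-th decays geometrically
  have hlim : Tendsto (fun k => (∑ i ∈ s, D i * z i ^ k) / z I ^ k) atTop (𝓝 (D I)) := by
    have hterm : ∀ j ∈ s', Tendsto (fun k => D j * (z j / z I) ^ k) atTop
        (𝓝 (if j = I then D I else 0)) := by
      intro j hj
      split_ifs with hjI
      · subst hjI
        simp [div_self hzI]
      · have hlt : ‖z j / z I‖ < 1 := by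
          rw [norm_div, div_lt_one (one_pos.trans_le hI1)]
          exact (hmax j hj).lt_of_ne fun h => hjI (hz (filter_subset _ _ hj) hIs h)
        simpa using (tendsto_pow_atTop_nhds_zero_of_norm_lt_one hlt).const_mul (D j)
    have := tendsto_finsetSum s' hterm
    rw [sum_ite_eq', if_pos hI] at this
    simpa only [hsum] using this
  have hzero : Tendsto (fun k => (∑ i ∈ s, D i * z i ^ k) / z I ^ k) atTop (𝓝 0) := by
    refine squeeze_zero_norm (fun k => ?_) (tendsto_zero_iff_norm_tendsto_zero.1 h)
    rw [norm_div, norm_pow]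
    exact div_le_self (norm_nonneg _) (one_le_pow₀ hI1)
  exact hDI (tendsto_nhds_unique hlim hzero)

theorem summable_sum_mul_pow {𝕜 ι : Type*} [NormedField 𝕜] [CompleteSpace 𝕜] {s : Finset ι}
    {D z : ι → 𝕜} (h : ∀ i ∈ s, D i ≠ 0 → ‖z i‖ < 1) :
    Summable fun k => ∑ i ∈ s, D i * z i ^ k := by
  refine summable_sum fun i hi => ?_
  by_cases hDi : D i = 0
  · simp [hDi, summable_zero]
  · exact (summable_geometric_of_norm_lt_one (h i hi hDi)).mul_left _

theorem fib_add_eq_goldenRatio_goldenConj (a b : ℕ) :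
    (Nat.fib (a + b) : ℂ) = (φ : ℂ) ^ a * Nat.fib b + (ψ : ℂ) ^ b * Nat.fib a := by
  have h5 : (√5 : ℝ) ≠ 0 := by positivity
  have key : (Nat.fib (a + b) : ℝ) = φ ^ a * Nat.fib b + ψ ^ b * Nat.fib a := by
    rw [Real.coe_fib_eq, Real.coe_fib_eq, Real.coe_fib_eq]
    field_simp
    ring
  exact_mod_cast congrArg ((↑) : ℝ → ℂ) key

theorem neg_one_pow_add_two_div_two {R : Type*} [Monoid R] [HasDistribNeg R] (t : ℕ) :
    (-1 : R) ^ ((t + 2) / 2) = -(-1) ^ t * (-1) ^ ((t + 1) / 2) := by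
  obtain ⟨k, rfl | rfl⟩ := Nat.even_or_odd' t
  · rw [show (2 * k + 2) / 2 = k + 1 by omega, show (2 * k + 1) / 2 = k by omega]
    simp [pow_succ, pow_mul]
  · rw [show (2 * k + 1 + 2) / 2 = k + 1 by omega, show (2 * k + 1 + 1) / 2 = k + 1 by omega]
    simp [pow_succ, pow_mul]

def fibFactorial (m : ℕ) : ℂ := ∏ j ∈ range m, (Nat.fib (j + 1) : ℂ)

theorem fibFactorial_succ (m : ℕ) : fibFactorial (m + 1) = fibFactorial m * Nat.fib (m + 1) :=
  prod_range_succ _ _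

theorem fibFactorial_ne_zero (m : ℕ) : fibFactorial m ≠ 0 :=
  prod_ne_zero_iff.2 fun j _ => Nat.cast_ne_zero.2 (Nat.fib_pos.2 j.succ_pos).ne'

theorem fibBinom_eq_prod_range (p q : ℕ) :
    fibBinom p q = ∏ j ∈ range q, (Nat.fib (p - q + j + 1) : ℂ) / Nat.fib (j + 1) := by
  rw [fibBinom, ← Ico_add_one_right_eq_Icc, prod_Ico_eq_prod_range, Nat.add_sub_cancel]
  exact prod_congr rfl fun j _ => by rw [add_comm 1 j, ← add_assoc]

theorem fibBinom_eq_div (p q : ℕ) (h : q ≤ p) :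
    fibBinom p q = fibFactorial p / (fibFactorial q * fibFactorial (p - q)) := by
  have hsplit : fibFactorial p =
      fibFactorial (p - q) * ∏ j ∈ range q, (Nat.fib (p - q + j + 1) : ℂ) := by
    rw [fibFactorial, fibFactorial, ← prod_range_add, Nat.sub_add_cancel h]
  rw [fibBinom_eq_prod_range, prod_div_distrib, hsplit, mul_comm (fibFactorial q),
    mul_div_mul_left _ _ (fibFactorial_ne_zero _)]
  rfl

theorem fibBinom_zero_right (p : ℕ) : fibBinom p 0 = 1 := by simp [fibBinom]

theorem fibBinom_self (p : ℕ) : fibBinom p p = 1 := by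
  rw [fibBinom_eq_div p p le_rfl, Nat.sub_self, show fibFactorial 0 = 1 from prod_range_zero _,
    mul_one, div_self (fibFactorial_ne_zero p)]

theorem fibBinom_succ_succ {m s : ℕ} (hs : s < m) :
    fibBinom (m + 1) (s + 1) =
      (φ : ℂ) ^ (m - s) * fibBinom m s + (ψ : ℂ) ^ (s + 1) * fibBinom m (s + 1) := by
  obtain ⟨t, rfl⟩ : ∃ t, m = s + 1 + t := ⟨m - s - 1, by omega⟩
  rw [fibBinom_eq_div _ _ (by omega), fibBinom_eq_div _ _ (by omega),
    fibBinom_eq_div _ _ (by omega),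
    show s + 1 + t + 1 - (s + 1) = t + 1 by omega, show s + 1 + t - s = t + 1 by omega,
    show s + 1 + t - (s + 1) = t by omega, fibFactorial_succ (s + 1 + t), fibFactorial_succ s,
    fibFactorial_succ t]
  have hF := fib_add_eq_goldenRatio_goldenConj (t + 1) (s + 1)
  have := fibFactorial_ne_zero s
  have := fibFactorial_ne_zero t
  have : (Nat.fib (s + 1) : ℂ) ≠ 0 := Nat.cast_ne_zero.2 (Nat.fib_pos.2 s.succ_pos).ne'
  have : (Nat.fib (t + 1) : ℂ) ≠ 0 := Nat.cast_ne_zero.2 (Nat.fib_pos.2 t.succ_pos).ne'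
  rw [show t + 1 + (s + 1) = s + 1 + t + 1 by omega] at hF
  field_simp
  linear_combination fibFactorial (s + 1 + t) * hF

theorem fibBinom_succ_succ_mul_neg_one_pow {m s : ℕ} (hs : s < m) (c : ℂ) :
    fibBinom (m + 1) (s + 1) * (-1) ^ ((m - s + 1) / 2) * c ^ (m - s) =
      fibBinom m s * (-1) ^ ((m - s + 1) / 2) * (c * φ) ^ (m - s) -
        c * (ψ : ℂ) ^ m *
          (fibBinom m (s + 1) * (-1) ^ ((m - (s + 1) + 1) / 2) * (c * φ) ^ (m - (s + 1))) := by
  obtain ⟨t, rfl⟩ : ∃ t, m = s + 1 + t := ⟨m - s - 1, by omega⟩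
  have hφψ : (φ : ℂ) * ψ = -1 := by exact_mod_cast Real.goldenRatio_mul_goldenConj
  rw [fibBinom_succ_succ hs, show s + 1 + t - s = t + 1 by omega,
    show s + 1 + t - (s + 1) = t by omega, show t + 1 + 1 = t + 2 by omega,
    neg_one_pow_add_two_div_two]
  have h : (φ : ℂ) ^ t * ψ ^ t = (-1) ^ t := by rw [← mul_pow, hφψ]
  linear_combination
    (ψ : ℂ) ^ (s + 1) * fibBinom (s + 1 + t) (s + 1) * (-1) ^ ((t + 1) / 2) * c ^ (t + 1) * h

theorem prod_sub_mul_goldenRatio_pow_mul_goldenConj_pow (m : ℕ) (c x : ℂ) :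
    ∏ i ∈ range m, (x - c * ((φ : ℂ) ^ i * (ψ : ℂ) ^ (m - 1 - i))) =
      ∑ s ∈ range (m + 1), fibBinom m s * (-1) ^ ((m - s + 1) / 2) * c ^ (m - s) * x ^ s := by
  induction m generalizing c with
  | zero => simp [fibBinom_zero_right]
  | succ m ih =>
    calc ∏ i ∈ range (m + 1), (x - c * ((φ : ℂ) ^ i * (ψ : ℂ) ^ (m + 1 - 1 - i)))
        = (∏ i ∈ range m, (x - c * φ * ((φ : ℂ) ^ i * (ψ : ℂ) ^ (m - 1 - i)))) *
            (x - c * ψ ^ m) := by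
          rw [prod_range_succ']
          congr 1
          · refine prod_congr rfl fun i hi => ?_
            rw [show m + 1 - 1 - (i + 1) = m - 1 - i by omega, pow_succ]
            ring
          · simp
      _ = (∑ s ∈ range (m + 1),
              fibBinom m s * (-1) ^ ((m - s + 1) / 2) * (c * φ) ^ (m - s) * x ^ s) *
            (x - c * ψ ^ m) := by rw [ih]
      _ = _ := by
          rw [mul_sub, sum_mul, sum_mul, sum_range_succ, sum_range_succ', sum_range_succ',
            sum_range_succ (fun s => fibBinom (m + 1) (s + 1) * _ * _ * _)]
          have hmid : ∀ s ∈ range m,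
              fibBinom (m + 1) (s + 1) * (-1) ^ ((m + 1 - (s + 1) + 1) / 2) *
                  c ^ (m + 1 - (s + 1)) * x ^ (s + 1) =
                fibBinom m s * (-1) ^ ((m - s + 1) / 2) * (c * φ) ^ (m - s) * x ^ s * x -
                  fibBinom m (s + 1) * (-1) ^ ((m - (s + 1) + 1) / 2) * (c * φ) ^ (m - (s + 1)) *
                    x ^ (s + 1) * (c * ψ ^ m) := by
            intro s hs
            rw [Nat.add_sub_add_right, fibBinom_succ_succ_mul_neg_one_pow (mem_range.1 hs)]
            ring
          have hφψ : (φ : ℂ) ^ m * ψ ^ m = (-1) ^ m := by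
            rw [← mul_pow]; exact_mod_cast congrArg (· ^ m) Real.goldenRatio_mul_goldenConj
          rw [sum_congr rfl hmid, sum_sub_distrib, fibBinom_self, fibBinom_self,
            fibBinom_zero_right, fibBinom_zero_right, Nat.sub_self, Nat.sub_self, Nat.sub_zero,
            Nat.sub_zero, neg_one_pow_add_two_div_two m]
          linear_combination -(-1) ^ ((m + 1) / 2) * c ^ (m + 1) * hφψ

theorem exists_eq_goldenRatio_pow_add_goldenConj_pow {G : ℕ → ℂ}
    (hG : ∀ i, G (i + 2) = G (i + 1) + G i) : ∃ A B : ℂ, ∀ m, G m = A * φ ^ m + B * ψ ^ m := by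
  have hsub : (φ : ℂ) - ψ ≠ 0 := by
    rw [← Complex.ofReal_sub, Real.goldenRatio_sub_goldenConj, Complex.ofReal_ne_zero]
    positivity
  have hφ : (φ : ℂ) ^ 2 = φ + 1 := by exact_mod_cast Real.goldenRatio_sq
  have hψ : (ψ : ℂ) ^ 2 = ψ + 1 := by exact_mod_cast Real.goldenConj_sq
  refine ⟨(G 1 - G 0 * ψ) / (φ - ψ), (G 0 * φ - G 1) / (φ - ψ), fun m => ?_⟩
  induction m using Nat.twoStepInduction with
  | zero => field_simp; ring
  | one => field_simp; ring
  | more m ih₀ ih₁ =>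
    rw [hG, ih₀, ih₁]
    linear_combination
      -(G 1 - G 0 * ψ) / (φ - ψ) * φ ^ m * hφ - (G 0 * φ - G 1) / (φ - ψ) * ψ ^ m * hψ

theorem add_mul_pow_pow_eq_sum {R : Type*} [CommSemiring R] (A B a b : R) (n k : ℕ) :
    (A * a ^ k + B * b ^ k) ^ n =
      ∑ i ∈ range (n + 1), n.choose i * (A ^ i * B ^ (n - i)) * (a ^ i * b ^ (n - i)) ^ k := by
  rw [add_pow]
  exact sum_congr rfl fun i _ => by ring

theorem injOn_norm_goldenRatio_pow_mul_goldenConj_pow (n : ℕ) :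
    Set.InjOn (fun i => ‖(φ : ℂ) ^ i * (ψ : ℂ) ^ (n - i)‖) (range (n + 1)) := by
  have key : ∀ i ≤ n, ‖(φ : ℂ) ^ i * (ψ : ℂ) ^ (n - i)‖ * φ ^ n = φ ^ (2 * i) := by
    intro i hi
    obtain ⟨k, rfl⟩ := Nat.exists_eq_add_of_le hi
    rw [Nat.add_sub_cancel_left, norm_mul, norm_pow, norm_pow, Complex.norm_real,
      Complex.norm_real, Real.norm_eq_abs, Real.norm_eq_abs, abs_of_pos Real.goldenRatio_pos,
      abs_of_neg Real.goldenConj_neg, ← Real.inv_goldenRatio]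
    have hk : φ⁻¹ ^ k * φ ^ k = 1 := by
      rw [← mul_pow, inv_mul_cancel₀ Real.goldenRatio_ne_zero, one_pow]
    linear_combination φ ^ (2 * i) * hk
  intro i hi j hj h
  have := key i (by simpa [Nat.lt_succ_iff] using hi)
  rw [show ‖(φ : ℂ) ^ i * (ψ : ℂ) ^ (n - i)‖ = _ from h,
    key j (by simpa [Nat.lt_succ_iff] using hj)] at this
  have := pow_right_injective₀ Real.goldenRatio_pos Real.one_lt_goldenRatio.ne' this
  omega

theorem generating_function_G_pow (G : ℕ → ℂ) (hG : ∀ i, G (i + 2) = G (i + 1) + G i)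
    (n : ℕ) (w : ℂ)
    (hΔ : ∑ s ∈ Finset.range (n + 2),
      fibBinom (n + 1) s * (-1 : ℂ) ^ ((n + 1 - s + 1) / 2) * w ^ (n + 1 - s) ≠ 0)
    (hlim : Filter.Tendsto (fun k : ℕ => w ^ k * G k ^ n) Filter.atTop (nhds 0)) :
    HasSum (fun j : ℕ => w ^ j * G j ^ n)
      ((∑ s ∈ Finset.range (n + 2), fibBinom (n + 1) s * (-1 : ℂ) ^ ((n + 1 - s + 1) / 2) *
          ∑ j ∈ Finset.range s, w ^ (j + (n + 1 - s)) * G j ^ n) /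
        ∑ s ∈ Finset.range (n + 2),
          fibBinom (n + 1) s * (-1 : ℂ) ^ ((n + 1 - s + 1) / 2) * w ^ (n + 1 - s)) := by
  obtain ⟨A, B, hAB⟩ := exists_eq_goldenRatio_pow_add_goldenConj_pow hG
  set r : ℕ → ℂ := fun i => φ ^ i * ψ ^ (n - i)
  set D : ℕ → ℂ := fun i => n.choose i * (A ^ i * B ^ (n - i))
  have hf : ∀ k, w ^ k * G k ^ n = ∑ i ∈ range (n + 1), D i * (w * r i) ^ k := by
    intro k
    rw [hAB, add_mul_pow_pow_eq_sum, mul_sum]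
    exact sum_congr rfl fun i _ => by ring
  have hroot : ∀ i ∈ range (n + 1), ∑ s ∈ range (n + 2),
      fibBinom (n + 1) s * (-1) ^ ((n + 1 - s + 1) / 2) * w ^ (n + 1 - s) * (w * r i) ^ s = 0 := by
    intro i hi
    rw [← prod_sub_mul_goldenRatio_pow_mul_goldenConj_pow]
    exact prod_eq_zero hi (by simp [r])
  have hsum : Summable fun k => w ^ k * G k ^ n := by
    simp_rw [hf] at hlim ⊢
    refine summable_sum_mul_pow fun i hi hDi => ?_
    rcases eq_or_ne w 0 with rfl | hw
    · simp
    refine norm_lt_one_of_tendsto_sum_mul_pow (z := fun i => w * r i) (fun i hi j hj h => ?_)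
      hlim hi hDi
    exact injOn_norm_goldenRatio_pow_mul_goldenConj_pow n hi hj (by simpa [r, hw] using h)
  rw [hsum.hasSum_iff_tendsto_nat]
  convert tendsto_sum_range_of_recurrence
    (fun m => by simpa only [hf] using sum_mul_sum_mul_pow_add_eq_zero hroot m) hlim hΔ using 3
  refine sum_congr rfl fun s _ => ?_
  rw [mul_sum, mul_sum]
  exact sum_congr rfl fun j _ => by ring
end

section
/- Let G : ℕ → ℂ satisfy G(i+2) = G(i+1) + G(i) for all i ≥ 0, and let w ∈ ℂ with w ≠ 0 and 1 − w − w² ≠ 0. If w^k · G(k) → 0 and k · w^k · G(k) → 0 as k → ∞, then the series ∑_{j=0}^{∞} w^j · j · G(j) converges and ∑_{j=0}^{∞} w^j · j · G(j) = ((2 − w)·w²·G(0) + (w² + 1)·w·G(1)) / (w² + w − 1)². -/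
/-!
The sequence `x n = w ^ n * G n` satisfies `x (n + 2) = w * x (n + 1) + w ^ 2 * x n`, whose
characteristic roots `w φ` and `w ψ` are distinct, so `x` is a sum of two geometric sequences.
Since `x → 0`, each of them is either zero or has ratio of norm `< 1`; hence `∑ x n` and
`∑ n * x n` converge absolutely. Shifting the index of both sums by two and using the recurrence
gives two linear equations for their values, both with leading coefficient `1 - w - w ^ 2`.
-/

open Filter Topology

section LinearRecurrence

variable {K : Type*} [Field K]

theorem exists_eq_mul_pow_add_mul_pow {x : ℕ → K} {a b : K} (hab : a ≠ b)
    (hx : ∀ n, x (n + 2) = (a + b) * x (n + 1) - a * b * x n) :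
    ∃ A B : K, ∀ n, x n = A * a ^ n + B * b ^ n := by
  have hd : a - b ≠ 0 := sub_ne_zero.mpr hab
  refine ⟨(x 1 - b * x 0) / (a - b), (a * x 0 - x 1) / (a - b), fun n => ?_⟩
  induction n using Nat.twoStepInduction with
  | zero => field_simp; ring
  | one => field_simp; ring
  | more n ih₀ ih₁ => rw [hx, ih₀, ih₁]; ring

variable [TopologicalSpace K] [IsTopologicalRing K]

theorem tendsto_mul_pow_of_tendsto_add_mul_pow {A B a b : K} (hab : a ≠ b)
    (h : Tendsto (fun n : ℕ => A * a ^ n + B * b ^ n) atTop (𝓝 0)) :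
    Tendsto (fun n : ℕ => A * a ^ n) atTop (𝓝 0) := by
  have hd : a - b ≠ 0 := sub_ne_zero.mpr hab
  -- For `u n = A * a ^ n + B * b ^ n`, the combination `u (n + 1) - b * u n = (a - b) * A * a ^ n`.
  have h' := ((h.comp (tendsto_add_atTop_nat 1)).sub (h.const_mul b)).const_mul (a - b)⁻¹
  rw [mul_zero, sub_zero, mul_zero] at h'
  refine h'.congr fun n => ?_
  simp only [Function.comp_apply]
  field_simp
  ring

end LinearRecurrence

theorem summable_pow_mul_mul_pow_of_tendsto {K : Type*} [NormedField K] [CompleteSpace K]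
    {c z : K} (h : Tendsto (fun n : ℕ => c * z ^ n) atTop (𝓝 0)) (k : ℕ) :
    Summable (fun n : ℕ => (n : K) ^ k * (c * z ^ n)) := by
  rcases eq_or_ne c 0 with rfl | hc
  · simp
  have hz : ‖z‖ < 1 := tendsto_pow_atTop_nhds_zero_iff_norm_lt_one.mp <| by
    simpa [hc] using h.const_mul c⁻¹
  simpa [mul_left_comm] using (summable_pow_mul_geometric_of_norm_lt_one k hz).mul_left c

theorem summable_pow_mul_of_recurrence {K : Type*} [NormedField K] [CompleteSpace K]
    {x : ℕ → K} {a b : K} (hab : a ≠ b)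
    (hx : ∀ n, x (n + 2) = (a + b) * x (n + 1) - a * b * x n)
    (hlim : Tendsto x atTop (𝓝 0)) (k : ℕ) :
    Summable (fun n : ℕ => (n : K) ^ k * x n) := by
  obtain ⟨A, B, hAB⟩ := exists_eq_mul_pow_add_mul_pow hab hx
  rw [funext hAB] at hlim
  have hA := tendsto_mul_pow_of_tendsto_add_mul_pow hab hlim
  have hB := tendsto_mul_pow_of_tendsto_add_mul_pow hab.symm (by simpa only [add_comm] using hlim)
  simpa only [hAB, mul_add] using
    (summable_pow_mul_mul_pow_of_tendsto hA k).add (summable_pow_mul_mul_pow_of_tendsto hB k)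

section HasSum

variable {R : Type*} [CommRing R] [TopologicalSpace R] [IsTopologicalRing R] [T2Space R]
  {x : ℕ → R} {p q T : R}

theorem HasSum.one_sub_sub_mul_eq_of_recurrence
    (hx : ∀ n, x (n + 2) = p * x (n + 1) + q * x n) (hT : HasSum x T) :
    (1 - p - q) * T = x 0 + x 1 - p * x 0 := by
  have h₁ : HasSum (fun n => x (n + 1)) (T - x 0) := by
    simpa using (hasSum_nat_add_iff' 1).mpr hT
  have h₂ : HasSum (fun n => x (n + 2)) (T - (x 0 + x 1)) := by
    simpa [Finset.sum_range_succ] using (hasSum_nat_add_iff' 2).mpr hT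
  have h₂' : HasSum (fun n => x (n + 2)) (p * (T - x 0) + q * T) := by
    simpa only [hx] using (h₁.mul_left p).add (hT.mul_left q)
  linear_combination h₂.unique h₂'

theorem HasSum.one_sub_sub_mul_eq_of_recurrence_natCast_mul {S : R}
    (hx : ∀ n, x (n + 2) = p * x (n + 1) + q * x n) (hT : HasSum x T)
    (hS : HasSum (fun n : ℕ => (n : R) * x n) S) :
    (1 - p - q) * S = x 1 + p * (T - x 0) + 2 * q * T := by
  have h₁ : HasSum (fun n => x (n + 1)) (T - x 0) := by
    simpa using (hasSum_nat_add_iff' 1).mpr hT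
  have hS₁ : HasSum (fun n => ((n + 1 : ℕ) : R) * x (n + 1)) S := by
    simpa using (hasSum_nat_add_iff' 1).mpr hS
  have hS₂ : HasSum (fun n => ((n + 2 : ℕ) : R) * x (n + 2)) (S - x 1) := by
    simpa [Finset.sum_range_succ] using (hasSum_nat_add_iff' 2).mpr hS
  have hS₂' : HasSum (fun n => ((n + 2 : ℕ) : R) * x (n + 2))
      (p * (S + (T - x 0)) + q * (S + 2 * T)) := by
    refine ((hS₁.add h₁).mul_left p |>.add ((hS.add (hT.mul_left 2)).mul_left q)).congr_fun ?_
    intro n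
    rw [hx]
    push_cast
    ring
  linear_combination hS₂.unique hS₂'

end HasSum

theorem weighted_linear_sum_infinite_general (G : ℕ → ℂ) (hG : ∀ i, G (i + 2) = G (i + 1) + G i)
    (w : ℂ) (hw0 : w ≠ 0) (hw : 1 - w - w ^ 2 ≠ 0)
    (hlim1 : Filter.Tendsto (fun k : ℕ => w ^ k * G k) Filter.atTop (nhds 0)) :
    HasSum (fun j : ℕ => w ^ j * (j : ℂ) * G j)
      (((2 - w) * w ^ 2 * G 0 + (w ^ 2 + 1) * w * G 1) / (w ^ 2 + w - 1) ^ 2) := by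
  set x : ℕ → ℂ := fun n => w ^ n * G n
  have hx : ∀ n, x (n + 2) = w * x (n + 1) + w ^ 2 * x n := fun n => by
    simp only [x, hG]; ring
  -- The characteristic roots of `x` are `w φ` and `w ψ`, distinct since `w ≠ 0`.
  obtain ⟨φ, ψ, hφψ, hφψ_add, hφψ_mul⟩ : ∃ φ ψ : ℂ, φ ≠ ψ ∧ φ + ψ = 1 ∧ φ * ψ = -1 :=
    ⟨Real.goldenRatio, Real.goldenConj,
      Complex.ofReal_injective.ne (Real.goldenConj_neg.trans Real.goldenRatio_pos).ne',
      by exact_mod_cast Real.goldenRatio_add_goldenConj,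
      by exact_mod_cast Real.goldenRatio_mul_goldenConj⟩
  have hwφψ : w * φ ≠ w * ψ := (mul_right_injective₀ hw0).ne hφψ
  have hx_roots : ∀ n, x (n + 2) = (w * φ + w * ψ) * x (n + 1) - w * φ * (w * ψ) * x n := by
    intro n
    rw [hx]
    linear_combination (-w * x (n + 1)) * hφψ_add + w ^ 2 * x n * hφψ_mul
  obtain ⟨T, hT⟩ : Summable x := by simpa using summable_pow_mul_of_recurrence hwφψ hx_roots hlim1 0
  obtain ⟨S, hS⟩ : Summable fun n : ℕ => (n : ℂ) * x n := by
    simpa using summable_pow_mul_of_recurrence hwφψ hx_roots hlim1 1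
  have hT_eq := hT.one_sub_sub_mul_eq_of_recurrence hx
  have hS_eq := hT.one_sub_sub_mul_eq_of_recurrence_natCast_mul hx hS
  have hD : w ^ 2 + w - 1 ≠ 0 := fun h => hw (by linear_combination -h)
  convert hS using 1
  · ext j; simp only [x]; ring
  · simp only [x, pow_zero, pow_one, one_mul] at hT_eq hS_eq
    rw [div_eq_iff (pow_ne_zero 2 hD)]
    linear_combination (w ^ 2 + w - 1) * hS_eq - (w + 2 * w ^ 2) * hT_eq

theorem weighted_linear_sum_infinite (G : ℕ → ℂ) (hG : ∀ i, G (i + 2) = G (i + 1) + G i)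
    (w : ℂ) (hw0 : w ≠ 0) (hw : 1 - w - w ^ 2 ≠ 0)
    (hlim1 : Filter.Tendsto (fun k : ℕ => w ^ k * G k) Filter.atTop (nhds 0))
    (hlim2 : Filter.Tendsto (fun k : ℕ => (k : ℂ) * w ^ k * G k) Filter.atTop (nhds 0)) :
    HasSum (fun j : ℕ => w ^ j * (j : ℂ) * G j)
      (((2 - w) * w ^ 2 * G 0 + (w ^ 2 + 1) * w * G 1) / (w ^ 2 + w - 1) ^ 2) :=
  weighted_linear_sum_infinite_general G hG w hw0 hw hlim1
end
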